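/- Let L be a commutative unital quantale and let (P, e) be a continuous L-dcpo. Define an operator ⟨·⟩ on L-subsets of P by ⟨A⟩ = ⋁_{x∈P} A(x) ⊗ ⇓x (pointwise). Then (P, ⟨·⟩) is an interpolative generalized L-closure space. -/
import Mathlib


universe u

/-- A commutative unital quantale structure on a complete lattice `L`. -/
structure CommQuantale (L : Type u) [CompleteLattice L] : Type u where
  mul : L → L → L
  mul_comm : ∀ a b, mul a b = mul b a
  mul_assoc : ∀ a b c, mul (mul a b) c = mul a (mul b c)
  unit : L
  mul_unit : ∀ a, mul a unit = a
  mul_sSup : ∀ (a : L) (S : Set L), mul a (sSup S) = ⨆ s ∈ S, mul a s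

namespace CommQuantale

variable {L : Type u} [CompleteLattice L]

/-- The residuation `b → c`, the right adjoint of `⊗`. -/
def res (Q : CommQuantale L) (b c : L) : L := sSup {a | Q.mul a b ≤ c}

/-- `sub(A,B) = ⋀ₓ (A x → B x)` for `L`-subsets. -/
def subL (Q : CommQuantale L) {X : Type u} (A B : X → L) : L :=
  ⨅ x, Q.res (A x) (B x)

open Classical in
/-- The characteristic function `u_x`. -/
noncomputable def ux (Q : CommQuantale L) {X : Type u} (x : X) : X → L :=
  fun y => if y = x then Q.unit else ⊥

/-- `e` is an `L`-order on `P`. -/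
def IsLOrder (Q : CommQuantale L) {P : Type u} (e : P → P → L) : Prop :=
  (∀ x, Q.unit ≤ e x x) ∧
  (∀ x y z, Q.mul (e x y) (e y z) ≤ e x z) ∧
  (∀ x y, Q.unit ≤ e x y → Q.unit ≤ e y x → x = y)

/-- `D` is a directed `L`-subset of `(P, e)`. -/
def IsDirectedL (Q : CommQuantale L) {P : Type u} (e : P → P → L) (D : P → L) : Prop :=
  (Q.unit ≤ ⨆ x, D x) ∧
  (∀ x y, Q.mul (D x) (D y) ≤ ⨆ z, Q.mul (Q.mul (D z) (e x z)) (e y z))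

/-- `x₀` is the supremum `⊔A` of the `L`-subset `A`. -/
def IsSupL (Q : CommQuantale L) {P : Type u} (e : P → P → L) (A : P → L) (x₀ : P) : Prop :=
  ∀ y, e x₀ y = Q.subL A (fun x => e x y)

/-- `(P, e)` is an `L`-dcpo: every directed `L`-subset has a supremum. -/
def IsDcpoL (Q : CommQuantale L) {P : Type u} (e : P → P → L) : Prop :=
  ∀ D : P → L, Q.IsDirectedL e D → ∃ s, Q.IsSupL e D s

/-- `⇓x : P → L`, i.e. `⇓x(y) = ⋀_{D directed} (e(x, ⊔D) → ⋁_d D(d) ⊗ e(y,d))`. -/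
def wayBelow (Q : CommQuantale L) {P : Type u} (e : P → P → L) (x : P) : P → L := fun y =>
  ⨅ (D : P → L) (_ : Q.IsDirectedL e D) (s : P) (_ : Q.IsSupL e D s),
    Q.res (e x s) (⨆ d, Q.mul (D d) (e y d))

/-- `(P, e)` is a continuous `L`-dcpo. -/
def IsContinuousLDcpo (Q : CommQuantale L) {P : Type u} (e : P → P → L) : Prop :=
  Q.IsLOrder e ∧ Q.IsDcpoL e ∧
  ∀ x, Q.IsDirectedL e (Q.wayBelow e x) ∧ Q.IsSupL e (Q.wayBelow e x) x

open Classical in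
/-- `k(x)(y) = e(y,x)` if `y` is compact (i.e. `u ≤ ⇓y(y)`), else `0`. -/
noncomputable def kfun (Q : CommQuantale L) {P : Type u} (e : P → P → L) (x : P) : P → L :=
  fun y => if Q.unit ≤ Q.wayBelow e y y then e y x else ⊥

/-- `(P, e)` is an algebraic `L`-dcpo. -/
noncomputable def IsAlgebraicLDcpo (Q : CommQuantale L) {P : Type u} (e : P → P → L) : Prop :=
  Q.IsLOrder e ∧ Q.IsDcpoL e ∧
  ∀ x, Q.IsDirectedL e (Q.kfun e x) ∧ Q.IsSupL e (Q.kfun e x) x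

/-- `cl` is a generalized `L`-closure operator: (GC1) and (GC2). -/
def IsGenClosure (Q : CommQuantale L) {X : Type u} (cl : (X → L) → (X → L)) : Prop :=
  (∀ A B, Q.subL A B ≤ Q.subL (cl A) (cl B)) ∧
  (∀ A, cl (cl A) ≤ cl A)

/-- Interpolation conditions (IT1)-(IT3). -/
noncomputable def IsInterpolative (Q : CommQuantale L) {X : Type u}
    (cl : (X → L) → (X → L)) : Prop :=
  (∀ x, Q.unit ≤ ⨆ t, cl (Q.ux x) t) ∧
  (∀ x y, cl (Q.ux x) y ≤ ⨆ t, Q.mul (cl (Q.ux x) t) (cl (Q.ux t) y)) ∧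
  (∀ x a b, Q.mul (cl (Q.ux x) a) (cl (Q.ux x) b) ≤
    ⨆ t, Q.mul (Q.mul (cl (Q.ux x) t) (cl (Q.ux t) a)) (cl (Q.ux t) b))

/-- `U` is a directed closed set: (DC1)-(DC4). -/
noncomputable def IsDirClosed (Q : CommQuantale L) {X : Type u}
    (cl : (X → L) → (X → L)) (U : X → L) : Prop :=
  (Q.unit ≤ ⨆ x, U x) ∧
  (∀ x, U x ≤ Q.subL (cl (Q.ux x)) U) ∧
  (∀ x, U x ≤ ⨆ y, Q.mul (U y) (cl (Q.ux y) x)) ∧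
  (∀ x y, Q.mul (U x) (U y) ≤
    ⨆ z, Q.mul (Q.mul (U z) (cl (Q.ux z) x)) (cl (Q.ux z) y))

end CommQuantale

namespace CommQuantale

variable {L : Type u} [CompleteLattice L] (Q : CommQuantale L)

lemma mul_iSup' {ι : Sort*} (a : L) (f : ι → L) :
    Q.mul a (⨆ i, f i) = ⨆ i, Q.mul a (f i) := by
  rw [iSup, Q.mul_sSup, iSup_range]

lemma iSup_mul' {ι : Sort*} (a : L) (f : ι → L) :
    Q.mul (⨆ i, f i) a = ⨆ i, Q.mul (f i) a := by
  rw [Q.mul_comm, Q.mul_iSup']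
  exact iSup_congr fun i => Q.mul_comm a (f i)

lemma unit_mul (a : L) : Q.mul Q.unit a = a := by rw [Q.mul_comm, Q.mul_unit]

lemma mul_bot' (a : L) : Q.mul ⊥ a = ⊥ := by
  have h := Q.mul_sSup a (∅ : Set L)
  simp at h
  rw [Q.mul_comm]; exact h

lemma mul_mono (a : L) {b d : L} (h : b ≤ d) : Q.mul a b ≤ Q.mul a d := by
  have hd : d = sSup {b, d} := by rw [sSup_pair, sup_eq_right.mpr h]
  calc Q.mul a b ≤ ⨆ s ∈ ({b, d} : Set L), Q.mul a s :=
        le_iSup₂_of_le b (by simp) le_rfl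
    _ = Q.mul a d := by rw [← Q.mul_sSup, ← hd]

lemma mul_le_mul' {a b c d : L} (h1 : a ≤ c) (h2 : b ≤ d) : Q.mul a b ≤ Q.mul c d := by
  calc Q.mul a b ≤ Q.mul a d := Q.mul_mono a h2
    _ = Q.mul d a := Q.mul_comm a d
    _ ≤ Q.mul d c := Q.mul_mono d h1
    _ = Q.mul c d := Q.mul_comm d c

lemma mul_left_comm' (a b c : L) : Q.mul a (Q.mul b c) = Q.mul b (Q.mul a c) := by
  rw [← Q.mul_assoc, Q.mul_comm a b, Q.mul_assoc]

lemma le_mul_unit {c : L} (h : Q.unit ≤ c) (b : L) : b ≤ Q.mul b c := by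
  calc b = Q.mul b Q.unit := (Q.mul_unit b).symm
    _ ≤ Q.mul b c := Q.mul_mono b h

lemma res_mul_le (b c : L) : Q.mul (Q.res b c) b ≤ c := by
  rw [Q.mul_comm, res, Q.mul_sSup]
  exact iSup₂_le fun a ha => le_trans (le_of_eq (Q.mul_comm b a)) ha

lemma le_res {a b c : L} (h : Q.mul a b ≤ c) : a ≤ Q.res b c := le_sSup h

lemma res_le {a b c : L} (h : a ≤ Q.res b c) : Q.mul a b ≤ c :=
  le_trans (Q.mul_le_mul' h le_rfl) (Q.res_mul_le b c)

lemma unit_le_res {b c : L} (h : b ≤ c) : Q.unit ≤ Q.res b c :=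
  Q.le_res (le_trans (le_of_eq (Q.unit_mul b)) h)

lemma res_unit_le {b c : L} (h : Q.unit ≤ Q.res b c) : b ≤ c :=
  le_trans (le_of_eq (Q.unit_mul b).symm) (Q.res_le h)

lemma subL_def {X : Type u} (A B : X → L) : Q.subL A B = ⨅ x, Q.res (A x) (B x) := rfl

lemma subL_mul {X : Type u} (A B : X → L) (x : X) : Q.mul (Q.subL A B) (A x) ≤ B x :=
  Q.res_le (iInf_le _ x)

variable {P : Type u} (e : P → P → L)

lemma wb_spec {D : P → L} {s : P} (hD : Q.IsDirectedL e D) (hs : Q.IsSupL e D s)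
    (x y : P) :
    Q.mul (Q.wayBelow e x y) (e x s) ≤ ⨆ d, Q.mul (D d) (e y d) :=
  Q.res_le (iInf₂_le_of_le D hD (iInf₂_le s hs))

lemma le_wb {a : L} {x y : P}
    (h : ∀ (D : P → L), Q.IsDirectedL e D → ∀ s : P, Q.IsSupL e D s →
      Q.mul a (e x s) ≤ ⨆ d, Q.mul (D d) (e y d)) :
    a ≤ Q.wayBelow e x y :=
  le_iInf fun D => le_iInf fun hD => le_iInf fun s => le_iInf fun hs => Q.le_res (h D hD s hs)

lemma wb_lower (hord : Q.IsLOrder e) (x y y' : P) :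
    Q.mul (e y' y) (Q.wayBelow e x y) ≤ Q.wayBelow e x y' := by
  refine Q.le_wb e fun D hD s hs => ?_
  calc Q.mul (Q.mul (e y' y) (Q.wayBelow e x y)) (e x s)
      = Q.mul (e y' y) (Q.mul (Q.wayBelow e x y) (e x s)) := Q.mul_assoc _ _ _
    _ ≤ Q.mul (e y' y) (⨆ d, Q.mul (D d) (e y d)) := Q.mul_mono _ (Q.wb_spec e hD hs x y)
    _ = ⨆ d, Q.mul (e y' y) (Q.mul (D d) (e y d)) := Q.mul_iSup' _ _
    _ ≤ ⨆ d, Q.mul (D d) (e y' d) := by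
        refine iSup_mono fun d => ?_
        rw [Q.mul_left_comm']
        exact Q.mul_mono _ (hord.2.1 y' y d)

lemma wb_up (hord : Q.IsLOrder e) (t z a : P) :
    Q.mul (e t z) (Q.wayBelow e t a) ≤ Q.wayBelow e z a := by
  refine Q.le_wb e fun D hD s hs => ?_
  calc Q.mul (Q.mul (e t z) (Q.wayBelow e t a)) (e z s)
      = Q.mul (Q.wayBelow e t a) (Q.mul (e t z) (e z s)) := by
        rw [Q.mul_comm (e t z), Q.mul_assoc]
    _ ≤ Q.mul (Q.wayBelow e t a) (e t s) := Q.mul_mono _ (hord.2.1 t z s)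
    _ ≤ ⨆ d, Q.mul (D d) (e a d) := Q.wb_spec e hD hs t a

lemma down_directed (hord : Q.IsLOrder e) (x : P) :
    Q.IsDirectedL e (fun z => e z x) := by
  constructor
  · exact le_trans (hord.1 x) (le_iSup (fun z => e z x) x)
  · intro a b
    refine le_iSup_of_le x (Q.mul_le_mul' ?_ le_rfl)
    calc e a x = Q.mul Q.unit (e a x) := (Q.unit_mul _).symm
      _ ≤ Q.mul (e x x) (e a x) := Q.mul_le_mul' (hord.1 x) le_rfl

lemma down_sup (hord : Q.IsLOrder e) (x : P) :
    Q.IsSupL e (fun z => e z x) x := by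
  intro y
  apply le_antisymm
  · refine le_iInf fun z => Q.le_res ?_
    calc Q.mul (e x y) (e z x) = Q.mul (e z x) (e x y) := Q.mul_comm _ _
      _ ≤ e z y := hord.2.1 z x y
  · calc Q.subL (fun z => e z x) (fun z => e z y) ≤ Q.res (e x x) (e x y) :=
        iInf_le (fun z => Q.res (e z x) (e z y)) x
      _ ≤ e x y := le_trans (Q.le_mul_unit (hord.1 x) _) (Q.res_mul_le _ _)

lemma wb_le_e (hord : Q.IsLOrder e) (x y : P) : Q.wayBelow e x y ≤ e y x := by
  have h1 : Q.mul (Q.wayBelow e x y) (e x x) ≤ ⨆ d, Q.mul (e d x) (e y d) :=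
    Q.wb_spec e (Q.down_directed e hord x) (Q.down_sup e hord x) x y
  have h2 : (⨆ d, Q.mul (e d x) (e y d)) ≤ e y x := by
    refine iSup_le fun d => ?_
    rw [Q.mul_comm]; exact hord.2.1 y d x
  exact le_trans (Q.le_mul_unit (hord.1 x) _) (h1.trans h2)

lemma le_subL {X : Type u} {a : L} {A B : X → L} (h : ∀ x, Q.mul a (A x) ≤ B x) :
    a ≤ Q.subL A B :=
  le_iInf fun x => Q.le_res (h x)

lemma cl_ux (x t : P) :
    (⨆ y, Q.mul (Q.ux x y) (Q.wayBelow e y t)) = Q.wayBelow e x t := by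
  apply le_antisymm
  · refine iSup_le fun y => ?_
    by_cases h : y = x
    · subst h
      simp [ux, Q.unit_mul]
    · simp [ux, h, Q.mul_bot']
  · refine le_iSup_of_le x ?_
    simp [ux, Q.unit_mul]

lemma wb_key (hord : Q.IsLOrder e)
    (hcont : ∀ x, Q.IsDirectedL e (Q.wayBelow e x) ∧ Q.IsSupL e (Q.wayBelow e x) x)
    (x a b t s : P) :
    Q.mul (Q.mul (Q.wayBelow e x t) (Q.wayBelow e t a))
          (Q.mul (Q.wayBelow e x s) (Q.wayBelow e s b)) ≤
    ⨆ z, Q.mul (Q.mul (Q.wayBelow e x z) (Q.wayBelow e z a)) (Q.wayBelow e z b) := by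
  have h1 : Q.mul (Q.wayBelow e x t) (Q.wayBelow e x s) ≤
      ⨆ z, Q.mul (Q.mul (Q.wayBelow e x z) (e t z)) (e s z) := (hcont x).1.2 t s
  calc Q.mul (Q.mul (Q.wayBelow e x t) (Q.wayBelow e t a))
          (Q.mul (Q.wayBelow e x s) (Q.wayBelow e s b))
      = Q.mul (Q.mul (Q.wayBelow e x t) (Q.wayBelow e x s))
          (Q.mul (Q.wayBelow e t a) (Q.wayBelow e s b)) := by
        simp only [Q.mul_assoc, Q.mul_left_comm', Q.mul_comm]
    _ ≤ Q.mul (⨆ z, Q.mul (Q.mul (Q.wayBelow e x z) (e t z)) (e s z))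
          (Q.mul (Q.wayBelow e t a) (Q.wayBelow e s b)) := Q.mul_le_mul' h1 le_rfl
    _ = ⨆ z, Q.mul (Q.mul (Q.mul (Q.wayBelow e x z) (e t z)) (e s z))
          (Q.mul (Q.wayBelow e t a) (Q.wayBelow e s b)) := Q.iSup_mul' _ _
    _ ≤ ⨆ z, Q.mul (Q.mul (Q.wayBelow e x z) (Q.wayBelow e z a)) (Q.wayBelow e z b) := by
        refine iSup_mono fun z => ?_
        have h2 : Q.mul (e t z) (Q.wayBelow e t a) ≤ Q.wayBelow e z a := Q.wb_up e hord t z a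
        have h3 : Q.mul (e s z) (Q.wayBelow e s b) ≤ Q.wayBelow e z b := Q.wb_up e hord s z b
        calc Q.mul (Q.mul (Q.mul (Q.wayBelow e x z) (e t z)) (e s z))
                (Q.mul (Q.wayBelow e t a) (Q.wayBelow e s b))
            = Q.mul (Q.mul (Q.wayBelow e x z) (Q.mul (e t z) (Q.wayBelow e t a)))
                (Q.mul (e s z) (Q.wayBelow e s b)) := by
              simp only [Q.mul_assoc, Q.mul_left_comm', Q.mul_comm]
          _ ≤ Q.mul (Q.mul (Q.wayBelow e x z) (Q.wayBelow e z a)) (Q.wayBelow e z b) :=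
              Q.mul_le_mul' (Q.mul_mono _ h2) h3

lemma wb_interp (hord : Q.IsLOrder e) (hdcpo : Q.IsDcpoL e)
    (hcont : ∀ x, Q.IsDirectedL e (Q.wayBelow e x) ∧ Q.IsSupL e (Q.wayBelow e x) x)
    (x y : P) :
    Q.wayBelow e x y ≤ ⨆ t, Q.mul (Q.wayBelow e x t) (Q.wayBelow e t y) := by
  set D : P → L := fun d => ⨆ t, Q.mul (Q.wayBelow e x t) (Q.wayBelow e t d) with hDdef
  have hdir : Q.IsDirectedL e D := by
    constructor
    · calc Q.unit ≤ ⨆ t, Q.wayBelow e x t := (hcont x).1.1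
        _ ≤ ⨆ t, ⨆ d, Q.mul (Q.wayBelow e x t) (Q.wayBelow e t d) := by
            refine iSup_mono fun t => ?_
            calc Q.wayBelow e x t
                ≤ Q.mul (Q.wayBelow e x t) (⨆ d, Q.wayBelow e t d) :=
                  Q.le_mul_unit (hcont t).1.1 _
              _ = ⨆ d, Q.mul (Q.wayBelow e x t) (Q.wayBelow e t d) := Q.mul_iSup' _ _
        _ = ⨆ d, D d := iSup_comm
    · intro a b
      simp only [hDdef]
      calc Q.mul (⨆ t, Q.mul (Q.wayBelow e x t) (Q.wayBelow e t a))
              (⨆ s, Q.mul (Q.wayBelow e x s) (Q.wayBelow e s b))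
          = ⨆ t, ⨆ s, Q.mul (Q.mul (Q.wayBelow e x t) (Q.wayBelow e t a))
              (Q.mul (Q.wayBelow e x s) (Q.wayBelow e s b)) := by
            rw [Q.iSup_mul']; exact iSup_congr fun t => Q.mul_iSup' _ _
        _ ≤ ⨆ t, ⨆ s, ⨆ z, Q.mul (Q.mul (Q.wayBelow e x z) (Q.wayBelow e z a))
              (Q.wayBelow e z b) :=
            iSup_mono fun t => iSup_mono fun s => Q.wb_key e hord hcont x a b t s
        _ ≤ ⨆ z, Q.mul (Q.mul (⨆ t, Q.mul (Q.wayBelow e x t) (Q.wayBelow e t z)) (e a z))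
              (e b z) := by
            refine iSup_le fun t => iSup_le fun s => iSup_le fun z => ?_
            have h4 := (hcont z).1.2 a b
            calc Q.mul (Q.mul (Q.wayBelow e x z) (Q.wayBelow e z a)) (Q.wayBelow e z b)
                = Q.mul (Q.wayBelow e x z) (Q.mul (Q.wayBelow e z a) (Q.wayBelow e z b)) :=
                  Q.mul_assoc _ _ _
              _ ≤ Q.mul (Q.wayBelow e x z)
                  (⨆ w, Q.mul (Q.mul (Q.wayBelow e z w) (e a w)) (e b w)) := Q.mul_mono _ h4
              _ = ⨆ w, Q.mul (Q.wayBelow e x z)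
                  (Q.mul (Q.mul (Q.wayBelow e z w) (e a w)) (e b w)) := Q.mul_iSup' _ _
              _ ≤ ⨆ w, Q.mul (Q.mul (⨆ t', Q.mul (Q.wayBelow e x t') (Q.wayBelow e t' w))
                  (e a w)) (e b w) := by
                  refine iSup_mono fun w => ?_
                  have h5 : Q.mul (Q.wayBelow e x z) (Q.wayBelow e z w) ≤
                      ⨆ t', Q.mul (Q.wayBelow e x t') (Q.wayBelow e t' w) :=
                    le_iSup (fun t' => Q.mul (Q.wayBelow e x t') (Q.wayBelow e t' w)) z
                  calc Q.mul (Q.wayBelow e x z) (Q.mul (Q.mul (Q.wayBelow e z w) (e a w)) (e b w))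
                      = Q.mul (Q.mul (Q.mul (Q.wayBelow e x z) (Q.wayBelow e z w)) (e a w))
                          (e b w) := by rw [← Q.mul_assoc, ← Q.mul_assoc]
                    _ ≤ Q.mul (Q.mul (⨆ t', Q.mul (Q.wayBelow e x t') (Q.wayBelow e t' w))
                          (e a w)) (e b w) :=
                        Q.mul_le_mul' (Q.mul_le_mul' h5 le_rfl) le_rfl
  obtain ⟨s, hs⟩ := hdcpo D hdir
  have hDle : ∀ d, D d ≤ e d s := by
    intro d
    refine Q.res_unit_le ?_
    calc Q.unit ≤ e s s := hord.1 s
      _ = Q.subL D (fun d => e d s) := hs s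
      _ ≤ Q.res (D d) (e d s) := iInf_le _ d
  have hxs : Q.unit ≤ e x s := by
    rw [(hcont x).2 s]
    refine Q.le_subL fun t => ?_
    rw [Q.unit_mul]
    rw [(hcont t).2 s]
    refine Q.le_subL fun v => ?_
    refine le_trans ?_ (hDle v)
    simp only [hDdef]
    exact le_iSup (fun t' => Q.mul (Q.wayBelow e x t') (Q.wayBelow e t' v)) t
  calc Q.wayBelow e x y ≤ Q.mul (Q.wayBelow e x y) (e x s) := Q.le_mul_unit hxs _
    _ ≤ ⨆ d, Q.mul (D d) (e y d) := Q.wb_spec e hdir hs x y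
    _ ≤ ⨆ t, Q.mul (Q.wayBelow e x t) (Q.wayBelow e t y) := by
        refine iSup_le fun d => ?_
        simp only [hDdef]
        rw [Q.iSup_mul']
        refine iSup_le fun t => le_iSup_of_le t ?_
        calc Q.mul (Q.mul (Q.wayBelow e x t) (Q.wayBelow e t d)) (e y d)
            = Q.mul (Q.wayBelow e x t) (Q.mul (e y d) (Q.wayBelow e t d)) := by
              rw [Q.mul_assoc, Q.mul_comm (Q.wayBelow e t d)]
          _ ≤ Q.mul (Q.wayBelow e x t) (Q.wayBelow e t y) :=
              Q.mul_mono _ (Q.wb_lower e hord t d y)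

end CommQuantale


open CommQuantale in
/-- For a continuous L-dcpo (P,e), the operator ⟨A⟩ = ⋁ₓ A(x) ⊗ ⇓x makes P
an interpolative generalized L-closure space. -/
theorem stmt8 {L P : Type u} [CompleteLattice L] (Q : CommQuantale L)
    (e : P → P → L) (hord : Q.IsLOrder e) (hdcpo : Q.IsDcpoL e)
    (hcont : ∀ x, Q.IsDirectedL e (Q.wayBelow e x) ∧ Q.IsSupL e (Q.wayBelow e x) x) :
    Q.IsGenClosure (fun A : P → L => fun t => ⨆ x, Q.mul (A x) (Q.wayBelow e x t)) ∧
    Q.IsInterpolative (fun A : P → L => fun t => ⨆ x, Q.mul (A x) (Q.wayBelow e x t)) := by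
  have hclux : ∀ x t : P, (⨆ y, Q.mul (Q.ux x y) (Q.wayBelow e y t)) = Q.wayBelow e x t :=
    fun x t => Q.cl_ux e x t
  constructor
  · constructor
    · intro A B
      refine Q.le_subL fun t => ?_
      show Q.mul (Q.subL A B) (⨆ x, Q.mul (A x) (Q.wayBelow e x t)) ≤
        ⨆ x, Q.mul (B x) (Q.wayBelow e x t)
      rw [Q.mul_iSup']
      refine iSup_le fun z => le_iSup_of_le z ?_
      calc Q.mul (Q.subL A B) (Q.mul (A z) (Q.wayBelow e z t))
          = Q.mul (Q.mul (Q.subL A B) (A z)) (Q.wayBelow e z t) := (Q.mul_assoc _ _ _).symm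
        _ ≤ Q.mul (B z) (Q.wayBelow e z t) := Q.mul_le_mul' (Q.subL_mul A B z) le_rfl
    · intro A t
      show (⨆ y, Q.mul (⨆ x, Q.mul (A x) (Q.wayBelow e x y)) (Q.wayBelow e y t)) ≤
        ⨆ x, Q.mul (A x) (Q.wayBelow e x t)
      refine iSup_le fun y => ?_
      rw [Q.iSup_mul']
      refine iSup_le fun z => le_iSup_of_le z ?_
      calc Q.mul (Q.mul (A z) (Q.wayBelow e z y)) (Q.wayBelow e y t)
          = Q.mul (A z) (Q.mul (Q.wayBelow e z y) (Q.wayBelow e y t)) := Q.mul_assoc _ _ _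
        _ ≤ Q.mul (A z) (Q.wayBelow e z t) := by
            refine Q.mul_mono _ ?_
            calc Q.mul (Q.wayBelow e z y) (Q.wayBelow e y t)
                ≤ Q.mul (Q.wayBelow e z y) (e t y) := Q.mul_mono _ (Q.wb_le_e e hord y t)
              _ = Q.mul (e t y) (Q.wayBelow e z y) := Q.mul_comm _ _
              _ ≤ Q.wayBelow e z t := Q.wb_lower e hord z y t
  · refine ⟨fun x => ?_, fun x y => ?_, fun x a b => ?_⟩
    · show Q.unit ≤ ⨆ t, ⨆ y, Q.mul (Q.ux x y) (Q.wayBelow e y t)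
      simp only [hclux]
      exact (hcont x).1.1
    · show (⨆ z, Q.mul (Q.ux x z) (Q.wayBelow e z y)) ≤
        ⨆ t, Q.mul (⨆ z, Q.mul (Q.ux x z) (Q.wayBelow e z t))
          (⨆ z, Q.mul (Q.ux t z) (Q.wayBelow e z y))
      simp only [hclux]
      exact Q.wb_interp e hord hdcpo hcont x y
    · show Q.mul (⨆ z, Q.mul (Q.ux x z) (Q.wayBelow e z a))
          (⨆ z, Q.mul (Q.ux x z) (Q.wayBelow e z b)) ≤
        ⨆ t, Q.mul (Q.mul (⨆ z, Q.mul (Q.ux x z) (Q.wayBelow e z t))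
          (⨆ z, Q.mul (Q.ux t z) (Q.wayBelow e z a)))
          (⨆ z, Q.mul (Q.ux t z) (Q.wayBelow e z b))
      simp only [hclux]
      calc Q.mul (Q.wayBelow e x a) (Q.wayBelow e x b)
          ≤ Q.mul (⨆ t, Q.mul (Q.wayBelow e x t) (Q.wayBelow e t a))
            (⨆ s, Q.mul (Q.wayBelow e x s) (Q.wayBelow e s b)) :=
            Q.mul_le_mul' (Q.wb_interp e hord hdcpo hcont x a)
              (Q.wb_interp e hord hdcpo hcont x b)
        _ = ⨆ t, ⨆ s, Q.mul (Q.mul (Q.wayBelow e x t) (Q.wayBelow e t a))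
            (Q.mul (Q.wayBelow e x s) (Q.wayBelow e s b)) := by
            rw [Q.iSup_mul']; exact iSup_congr fun t => Q.mul_iSup' _ _
        _ ≤ ⨆ z, Q.mul (Q.mul (Q.wayBelow e x z) (Q.wayBelow e z a)) (Q.wayBelow e z b) :=
            iSup_le fun t => iSup_le fun s => Q.wb_key e hord hcont x a b t s
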